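/- arXiv:1706.00529 — 3 statements merged into one kernel-verified Lean document; each statement's English description precedes it below -/
import Mathlib

section
/- The map f' is injective on the set of transpositions of S_n, and the map F : NC(S_n) → {subspaces of 𝔽₂^{n−1}} satisfies: (i) F is order-preserving, i.e. v ≤ w in absolute order implies F(v) ⊆ F(w); (ii) dim F(w) = ℓ(w) for every w ∈ NC(S_n); (iii) F is injective on NC(S_n). In particular F is a rank-preserving embedding of the noncrossing partition lattice of type A_{n−1} into the lattice of linear subspaces of 𝔽₂^{n−1}. -/
namespace NCPaper

variable {G : Type*} [Group G]

/-- `lenT T w` is the least `k` such that `w` is a product of `k` elements of `T`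
(the reflection length with respect to `T`). -/
noncomputable def lenT (T : Set G) (w : G) : ℕ :=
  sInf {k | ∃ l : List G, (∀ t ∈ l, t ∈ T) ∧ l.length = k ∧ l.prod = w}

/-- The absolute order with respect to the generating set `T`. -/
def absLe (T : Set G) (v w : G) : Prop :=
  lenT T w = lenT T v + lenT T (v⁻¹ * w)

/-- Strict absolute order. -/
def absLt (T : Set G) (v w : G) : Prop := absLe T v w ∧ v ≠ w

/-- The noncrossing partition lattice `NC(W, c)`: the interval `[1, c]` in absolute order. -/
def NC (T : Set G) (c : G) : Set G := {w | absLe T w c}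

/-- A maximal chain `(w_0, …, w_k)` in `NC(W, c)`. -/
def IsNCMaxChain (T : Set G) (c : G) {k : ℕ} (w : Fin (k+1) → G) : Prop :=
  w 0 = 1 ∧ w (Fin.last k) = c ∧ (∀ i, w i ∈ NC T c) ∧
  (∀ i : Fin (k+1), lenT T (w i) = i.val) ∧
  ∀ i : Fin k, absLt T (w i.castSucc) (w i.succ)

/-- The Hurwitz graph: vertices are the maximal chains of `NC(W,c)`, and two chains are
adjacent iff they differ in exactly one entry. -/
def hurwitzGraph (T : Set G) (c : G) (k : ℕ) :
    SimpleGraph {w : Fin (k+1) → G // IsNCMaxChain T c w} where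
  Adj a b := ∃! i, a.1 i ≠ b.1 i
  symm := by
    constructor
    rintro a b ⟨i, hi, hu⟩
    exact ⟨i, hi.symm, fun j hj => hu j hj.symm⟩
  loopless := by constructor; rintro a ⟨i, hi, _⟩; exact hi rfl

/-- The set of transpositions (reflections) of the symmetric group `S_n`. -/
def ST (n : ℕ) : Set (Equiv.Perm (Fin n)) := {t | t.IsSwap}

end NCPaper
namespace NCPaper

/-- The image of the `i`-th vertex of the `n`-gon in `𝔽₂^{n-1}`: the basis vector `e_i`
for `i < n-1`, and `0` for the last vertex. -/
def vvec (n : ℕ) (i : Fin n) : Fin (n-1) → ZMod 2 :=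
  if h : i.val < n - 1 then Pi.single (⟨i.val, h⟩ : Fin (n-1)) 1 else 0

/-- `lineOfA n t L` says that `t` is the transposition `(i,j)` and `L` is the line
`f'(t)`, i.e. `span {e_i + e_j}` for `j < n` resp. `span {e_i}` for `j = n`. -/
def lineOfA (n : ℕ) (t : Equiv.Perm (Fin n))
    (L : Submodule (ZMod 2) (Fin (n-1) → ZMod 2)) : Prop :=
  ∃ i j : Fin n, i ≠ j ∧ t = Equiv.swap i j ∧
    L = Submodule.span (ZMod 2) {vvec n i + vvec n j}

/-- `FA n w` is the subspace of `𝔽₂^{n-1}` spanned by the union of the lines `f'(t)`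
over all transpositions `t ≤ w` in absolute order. -/
def FA (n : ℕ) (w : Equiv.Perm (Fin n)) : Submodule (ZMod 2) (Fin (n-1) → ZMod 2) :=
  sSup {L | ∃ t, lineOfA n t L ∧ absLe (ST n) t w}

/-!
`F w` is the span `mov w` of the vectors `vvec a + vvec (w a)`. A vector `vvec a + vvec b` lies
in `mov w` iff `a` and `b` lie in the same cycle of `w`, since a linear functional summing
coordinates over a `w`-invariant set kills `mov w`. Splitting a point off its cycle lowers
`dim mov` by exactly one, so `dim mov w = ℓ(w)`; counting dimensions in
`mov w ≤ mov v ⊔ mov (v⁻¹ w)` then gives `mov v ≤ mov w` for `v ≤ w`, which identifies `F` with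
`mov`.

Injectivity on `[1, c]` is the statement that `w ≤ c` is determined by its cycles: `w a` is the
first point of the cycle of `a` after `a` in the cyclic order of `c`. Indeed, with `s = (a, w a)`
we have `s w ≤ s c`, and `s c` has the two arcs `[a, w a)` and `[w a, a)` as its cycles, so the
cycle of `a` under `w = s (s w)` meets the first arc only in `a`.
-/

open Equiv Equiv.Perm Submodule Module Set

section AbsoluteOrder

variable {G : Type*} [Group G] {T : Set G}

lemma lenT_prod_le_length {l : List G} (hl : ∀ t ∈ l, t ∈ T) : lenT T l.prod ≤ l.length :=
  Nat.sInf_le ⟨l, hl, rfl, rfl⟩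

lemma exists_prod_eq_of_length_eq_lenT (hT : Submonoid.closure T = ⊤) (w : G) :
    ∃ l : List G, (∀ t ∈ l, t ∈ T) ∧ l.length = lenT T w ∧ l.prod = w := by
  obtain ⟨l, hl, hw⟩ := Submonoid.exists_list_of_mem_closure (hT ▸ Submonoid.mem_top w)
  exact Nat.sInf_mem (s := {k | ∃ l : List G, (∀ t ∈ l, t ∈ T) ∧ l.length = k ∧ l.prod = w})
    ⟨l.length, l, hl, rfl, hw⟩

lemma lenT_mul_le (hT : Submonoid.closure T = ⊤) (x y : G) :
    lenT T (x * y) ≤ lenT T x + lenT T y := by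
  obtain ⟨l, hl, hlen, rfl⟩ := exists_prod_eq_of_length_eq_lenT hT x
  obtain ⟨l', hl', hlen', rfl⟩ := exists_prod_eq_of_length_eq_lenT hT y
  rw [← hlen, ← hlen', ← List.length_append, ← List.prod_append]
  exact lenT_prod_le_length fun t ht => (List.mem_append.mp ht).elim (hl t) (hl' t)

lemma absLe_trans (hT : Submonoid.closure T = ⊤) {u v w : G} (huv : absLe T u v)
    (hvw : absLe T v w) : absLe T u w := by
  have h₁ := lenT_mul_le hT u (u⁻¹ * w)
  have h₂ := lenT_mul_le hT (u⁻¹ * v) (v⁻¹ * w)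
  simp only [mul_inv_cancel_left, mul_assoc] at h₁ h₂
  unfold absLe at *
  omega

lemma absLe_inv_mul (hT : Submonoid.closure T = ⊤) {s w c : G} (hsw : absLe T s w)
    (hwc : absLe T w c) : absLe T (s⁻¹ * w) (s⁻¹ * c) := by
  have h₁ := lenT_mul_le hT s (s⁻¹ * c)
  have h₂ := lenT_mul_le hT (s⁻¹ * w) (w⁻¹ * c)
  simp only [mul_inv_cancel_left, mul_assoc] at h₁ h₂
  unfold absLe at *
  rw [show (s⁻¹ * w)⁻¹ * (s⁻¹ * c) = w⁻¹ * c by group]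
  omega

end AbsoluteOrder

lemma closure_ST (n : ℕ) : Submonoid.closure (ST n) = ⊤ := mclosure_isSwap

section MovedSpace

variable {n : ℕ}

lemma exists_linearMap_vvec_add (g : Fin n → ZMod 2) :
    ∃ φ : (Fin (n - 1) → ZMod 2) →ₗ[ZMod 2] ZMod 2,
      ∀ y z, φ (vvec n y + vvec n z) = g y + g z := by
  rcases n with _ | N
  · exact ⟨0, fun y => y.elim0⟩
  let φ := Fintype.linearCombination (ZMod 2)
    fun i : Fin (N + 1 - 1) => g (Fin.castLE (by omega) i) + g (Fin.last N)
  have hφ : ∀ y, φ (vvec (N + 1) y) = g y + g (Fin.last N) := by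
    refine Fin.lastCases ?_ fun i => ?_
    · simp [vvec, ZModModule.add_self]
    · simp only [φ, vvec, Fin.val_castSucc, Nat.add_one_sub_one, Fin.is_lt, ↓reduceDIte,
        Fintype.linearCombination_apply_single, one_smul]
      rfl
  refine ⟨φ, fun y z => ?_⟩
  rw [map_add, hφ, hφ, add_add_add_comm, ZModModule.add_self, add_zero]

lemma vvec_add_vvec_ne_zero {i j : Fin n} (hij : i ≠ j) : vvec n i + vvec n j ≠ 0 := by
  classical
  obtain ⟨φ, hφ⟩ := exists_linearMap_vvec_add fun y => if y = i then (1 : ZMod 2) else 0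
  intro h
  simpa [hij.symm, h] using hφ i j

/-- The image of the moved space `im (w - 1)` of the permutation representation on `𝔽₂ⁿ` under
the projection `𝔽₂ⁿ → 𝔽₂ⁿ⁻¹` that forgets the last coordinate. -/
def mov (n : ℕ) (w : Perm (Fin n)) : Submodule (ZMod 2) (Fin (n - 1) → ZMod 2) :=
  span (ZMod 2) (range fun a => vvec n a + vvec n (w a))

lemma vvec_add_apply_mem_mov (w : Perm (Fin n)) (a : Fin n) : vvec n a + vvec n (w a) ∈ mov n w :=
  subset_span ⟨a, rfl⟩

lemma mov_one : mov n 1 = ⊥ := by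
  simp [mov, ZModModule.add_self]

lemma mov_mul_le (u v : Perm (Fin n)) : mov n (u * v) ≤ mov n u ⊔ mov n v := by
  refine span_le.mpr ?_
  rintro _ ⟨a, rfl⟩
  show vvec n a + vvec n (u (v a)) ∈ _
  rw [← ZModModule.add_add_add_cancel (vvec n a) (vvec n (v a))]
  exact add_mem (mem_sup_right (vvec_add_apply_mem_mov v a))
    (mem_sup_left (vvec_add_apply_mem_mov u (v a)))

lemma mov_swap (i j : Fin n) : mov n (swap i j) = span (ZMod 2) {vvec n i + vvec n j} := by
  refine le_antisymm (span_le.mpr ?_) ?_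
  · rintro _ ⟨a, rfl⟩
    rcases eq_or_ne a i with rfl | hai
    · simp [mem_span_singleton_self]
    rcases eq_or_ne a j with rfl | haj
    · simp [add_comm, mem_span_singleton_self]
    · simp [swap_apply_of_ne_of_ne hai haj, ZModModule.add_self]
  · simpa using vvec_add_apply_mem_mov (swap i j) i

lemma finrank_mov_swap {i j : Fin n} (hij : i ≠ j) : finrank (ZMod 2) (mov n (swap i j)) = 1 := by
  rw [mov_swap, finrank_span_singleton (vvec_add_vvec_ne_zero hij)]

lemma finrank_mov_le_lenT (w : Perm (Fin n)) : finrank (ZMod 2) (mov n w) ≤ lenT (ST n) w := by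
  obtain ⟨l, hl, hlen, rfl⟩ := exists_prod_eq_of_length_eq_lenT (closure_ST n) w
  rw [← hlen]
  clear hlen
  induction l with
  | nil => rw [List.prod_nil, mov_one, finrank_bot, List.length_nil]
  | cons t l ih =>
    obtain ⟨i, j, hij, rfl⟩ := hl t List.mem_cons_self
    calc finrank (ZMod 2) (mov n (swap i j * l.prod))
        ≤ finrank (ZMod 2) (mov n (swap i j) ⊔ mov n l.prod : Submodule (ZMod 2) _) :=
          Submodule.finrank_mono (mov_mul_le _ _)
      _ ≤ 1 + l.length := by
        grw [finrank_add_le_finrank_add_finrank, finrank_mov_swap hij,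
          ih fun t ht => hl t (List.mem_cons_of_mem _ ht)]
      _ = (swap i j :: l).length := by simp [add_comm]

lemma mem_iff_mem_of_vvec_add_mem_mov {w : Perm (Fin n)} {S : Set (Fin n)}
    (hS : ∀ y, w y ∈ S ↔ y ∈ S) {a b : Fin n} (h : vvec n a + vvec n b ∈ mov n w) :
    a ∈ S ↔ b ∈ S := by
  classical
  obtain ⟨φ, hφ⟩ := exists_linearMap_vvec_add fun y => if y ∈ S then (1 : ZMod 2) else 0
  have hker : mov n w ≤ LinearMap.ker φ := by
    refine span_le.mpr ?_
    rintro _ ⟨y, rfl⟩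
    simp [hφ, hS, ZModModule.add_self]
  have := LinearMap.mem_ker.mp (hker h)
  rw [hφ] at this
  by_cases ha : a ∈ S <;> by_cases hb : b ∈ S <;> simp_all

lemma vvec_add_mem_mov_of_sameCycle {w : Perm (Fin n)} {a b : Fin n} (h : w.SameCycle a b) :
    vvec n a + vvec n b ∈ mov n w := by
  obtain ⟨i, rfl⟩ := h.exists_nat_pow_eq
  clear h
  induction i with
  | zero => simp [ZModModule.add_self]
  | succ i ih =>
    rw [pow_succ', mul_apply, ← ZModModule.add_add_add_cancel _ (vvec n ((w ^ i) a))]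
    exact add_mem ih (vvec_add_apply_mem_mov w _)

lemma vvec_add_mem_mov_iff {w : Perm (Fin n)} {a b : Fin n} :
    vvec n a + vvec n b ∈ mov n w ↔ w.SameCycle a b := by
  refine ⟨fun h => ?_, vvec_add_mem_mov_of_sameCycle⟩
  have hS : ∀ y, w y ∈ {y | w.SameCycle a y} ↔ y ∈ {y | w.SameCycle a y} :=
    fun _ => sameCycle_apply_right
  exact (mem_iff_mem_of_vvec_add_mem_mov hS h).mp (SameCycle.refl w a)

lemma mov_swap_mul_lt {w : Perm (Fin n)} {a : Fin n} (ha : w a ≠ a) :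
    mov n (swap a (w a) * w) < mov n w := by
  have hswap : mov n (swap a (w a)) ≤ mov n w := by
    rw [mov_swap, span_singleton_le_iff_mem]
    exact vvec_add_apply_mem_mov w a
  refine lt_of_le_of_ne ((mov_mul_le _ _).trans (sup_le hswap le_rfl)) fun h => ha ?_
  have hfix : (swap a (w a) * w) a = a := by simp
  have hS : ∀ y, (swap a (w a) * w) y ∈ ({a} : Set (Fin n)) ↔ y ∈ ({a} : Set (Fin n)) :=
    fun y => (swap a (w a) * w).injective.eq_iff' hfix
  exact (mem_iff_mem_of_vvec_add_mem_mov hS (h ▸ vvec_add_apply_mem_mov w a)).mp rfl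

lemma lenT_le_lenT_mul_add_one {t : Perm (Fin n)} (ht : t ∈ ST n) (w : Perm (Fin n)) :
    lenT (ST n) w ≤ lenT (ST n) (t * w) + 1 := by
  have ht₁ : lenT (ST n) t ≤ 1 := by
    simpa using lenT_prod_le_length (T := ST n) (l := [t]) (by simpa using ht)
  obtain ⟨i, j, -, rfl⟩ := ht
  calc lenT (ST n) w = lenT (ST n) (swap i j * (swap i j * w)) := by rw [swap_mul_self_mul]
    _ ≤ lenT (ST n) (swap i j) + lenT (ST n) (swap i j * w) := lenT_mul_le (closure_ST n) _ _
    _ ≤ lenT (ST n) (swap i j * w) + 1 := by grw [ht₁, add_comm]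

lemma lenT_le_finrank_mov (w : Perm (Fin n)) : lenT (ST n) w ≤ finrank (ZMod 2) (mov n w) := by
  induction h : w.support.card using Nat.strong_induction_on generalizing w with
  | _ N ih =>
  by_cases hw : ∃ a, w a ≠ a
  · obtain ⟨a, ha⟩ := hw
    have hlt := Submodule.finrank_lt_finrank_of_lt (mov_swap_mul_lt ha)
    have hind := ih _ (h ▸ card_support_swap_mul ha) _ rfl
    have := lenT_le_lenT_mul_add_one ⟨a, w a, ha.symm, rfl⟩ w
    omega
  · obtain rfl : w = 1 := Equiv.ext (by simpa using hw)
    exact (lenT_prod_le_length (l := []) (by simp)).trans (Nat.zero_le _)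

lemma lenT_eq_finrank_mov (w : Perm (Fin n)) : lenT (ST n) w = finrank (ZMod 2) (mov n w) :=
  (lenT_le_finrank_mov w).antisymm (finrank_mov_le_lenT w)

lemma swap_absLe {w : Perm (Fin n)} {a : Fin n} (ha : w a ≠ a) :
    absLe (ST n) (swap a (w a)) w := by
  have hlt := Submodule.finrank_lt_finrank_of_lt (mov_swap_mul_lt ha)
  have := lenT_le_lenT_mul_add_one ⟨a, w a, ha.symm, rfl⟩ w
  rw [absLe, swap_inv, lenT_eq_finrank_mov (swap a (w a)), finrank_mov_swap ha.symm]
  rw [lenT_eq_finrank_mov, lenT_eq_finrank_mov] at this ⊢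
  omega

lemma mov_le_of_absLe {v w : Perm (Fin n)} (h : absLe (ST n) v w) : mov n v ≤ mov n w := by
  have hsup : mov n w ≤ mov n v ⊔ mov n (v⁻¹ * w) := by
    simpa using mov_mul_le v (v⁻¹ * w)
  have hrank := finrank_add_le_finrank_add_finrank (mov n v) (mov n (v⁻¹ * w))
  rw [absLe, lenT_eq_finrank_mov, lenT_eq_finrank_mov, lenT_eq_finrank_mov] at h
  exact le_sup_left.trans (eq_of_le_of_finrank_le hsup (h ▸ hrank)).ge

lemma sameCycle_of_absLe {v w : Perm (Fin n)} (h : absLe (ST n) v w) {a b : Fin n}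
    (hab : v.SameCycle a b) : w.SameCycle a b :=
  vvec_add_mem_mov_iff.mp (mov_le_of_absLe h (vvec_add_mem_mov_iff.mpr hab))

lemma FA_eq_mov (w : Perm (Fin n)) : FA n w = mov n w := by
  refine le_antisymm (sSup_le ?_) (span_le.mpr ?_)
  · rintro _ ⟨_, ⟨i, j, -, rfl, rfl⟩, hle⟩
    exact mov_swap i j ▸ mov_le_of_absLe hle
  · rintro _ ⟨a, rfl⟩
    rcases eq_or_ne (w a) a with hfix | ha
    · simp [hfix, ZModModule.add_self]
    · have hL : span (ZMod 2) {vvec n a + vvec n (w a)} ≤ FA n w :=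
        le_sSup ⟨swap a (w a), ⟨a, w a, ha.symm, rfl, rfl⟩, swap_absLe ha⟩
      exact hL (mem_span_singleton_self _)

end MovedSpace

lemma mem_of_sameCycle_of_mapsTo {α : Type*} [Finite α] {f : Perm α} {s : Set α}
    (hs : MapsTo f s s) {x y : α} (h : f.SameCycle x y) (hx : x ∈ s) : y ∈ s := by
  obtain ⟨i, rfl⟩ := h.exists_nat_pow_eq
  rw [coe_pow]
  exact hs.iterate i hx

section Noncrossing

variable {n : ℕ}

-- `(y - a).val` is the number of steps of `finRotate n` from `a` to `y`, so the set below is the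
-- arc `[a, b)`.
lemma mapsTo_swap_mul_finRotate (a b : Fin n) :
    MapsTo (swap a b * finRotate n) {y | (y - a).val < (b - a).val}
      {y | (y - a).val < (b - a).val} := by
  intro y (hy : (y - a).val < (b - a).val)
  have := y.neZero
  have hy₁ : (y + 1 - a).val = (y - a).val + 1 := by
    rw [← sub_add_eq_add_sub]
    exact Fin.val_add_one_of_lt' (by omega)
  simp only [mem_ofPred_eq, mul_apply, finRotate_apply, swap_apply_def]
  split_ifs with ha hb
  · simp [ha] at hy₁
  · simpa using hy.trans_le' (Nat.zero_le _)
  · have : (y + 1 - a).val ≠ (b - a).val := fun h => hb (sub_left_inj.mp (Fin.ext h))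
    omega

lemma not_sameCycle_of_absLe_finRotate {w : Perm (Fin n)} (hw : absLe (ST n) w (finRotate n))
    {a b : Fin n} (hb : 0 < (b - a).val) (hbw : (b - a).val < (w a - a).val) :
    ¬ w.SameCycle a b := by
  intro hab
  have := a.neZero
  set s := swap a (w a)
  set A : Set (Fin n) := {y | (y - a).val < (w a - a).val}
  have ha : w a ≠ a := by
    rintro h
    simp [h] at hbw
  have haA : a ∈ A := by
    show (a - a).val < _
    simpa using hb.trans hbw
  have hs : absLe (ST n) (s * w) (s * finRotate n) := by
    simpa only [s, swap_inv] using absLe_inv_mul (closure_ST n) (swap_absLe ha) hw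
  have hsw : ∀ y ∉ A, (s * w) y ∉ A := fun y hy hA =>
    hy (mem_of_sameCycle_of_mapsTo (mapsTo_swap_mul_finRotate a (w a))
      (sameCycle_of_absLe hs (sameCycle_apply_right.mpr (SameCycle.refl _ y))).symm hA)
  have hD : MapsTo w (insert a Aᶜ) (insert a Aᶜ) := by
    rintro y (hya | hy)
    · rw [hya]
      exact Or.inr (lt_irrefl (w a - a).val)
    · have hy' : w y = s ((s * w) y) := (swap_apply_self _ _ _).symm
      rw [hy', swap_apply_def]
      split_ifs with h₁ h₂
      · exact absurd (h₁ ▸ haA) (hsw y hy)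
      · exact Or.inl rfl
      · exact Or.inr (hsw y hy)
  rcases mem_of_sameCycle_of_mapsTo hD hab (Or.inl rfl) with rfl | hbA
  · simp at hb
  · exact hbA hbw

lemma sub_val_le_of_sameCycle_iff {v w : Perm (Fin n)} (hw : absLe (ST n) w (finRotate n))
    {a : Fin n} (hvw : ∀ b, v.SameCycle a b ↔ w.SameCycle a b) :
    (w a - a).val ≤ (v a - a).val := by
  have := a.neZero
  have hw_cyc : v.SameCycle a (w a) := (hvw _).mpr (sameCycle_apply_right.mpr (.refl _ _))
  by_cases hva : v a = a
  · simp [← hw_cyc.eq_of_left hva]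
  · by_contra! hlt
    refine not_sameCycle_of_absLe_finRotate hw ?_ hlt
      ((hvw _).mp (sameCycle_apply_right.mpr (.refl _ _)))
    exact Nat.pos_of_ne_zero (Fin.val_ne_zero_iff.mpr (sub_ne_zero.mpr hva))

lemma eq_of_mov_eq_of_absLe_finRotate {v w : Perm (Fin n)} (hv : absLe (ST n) v (finRotate n))
    (hw : absLe (ST n) w (finRotate n)) (h : mov n v = mov n w) : v = w := by
  have hvw : ∀ a b, v.SameCycle a b ↔ w.SameCycle a b := fun a b => by
    rw [← vvec_add_mem_mov_iff, h, vvec_add_mem_mov_iff]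
  refine Equiv.ext fun a => ?_
  have := a.neZero
  have hsub : v a - a = w a - a := Fin.ext <| le_antisymm
    (sub_val_le_of_sameCycle_iff hv fun b => (hvw a b).symm)
    (sub_val_le_of_sameCycle_iff hw (hvw a))
  exact sub_left_inj.mp hsub

end Noncrossing

lemma swap_eq_of_vvec_add_mem_mov_swap {n : ℕ} {i j k l : Fin n} (hij : i ≠ j) (hkl : k ≠ l)
    (h : vvec n i + vvec n j ∈ mov n (swap k l)) : swap i j = swap k l := by
  have hij' := vvec_add_mem_mov_iff.mp h
  have hi : i ∈ (swap k l).support := by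
    by_contra hi
    exact hij (hij'.eq_of_left (notMem_support.mp hi))
  have hj : j ∈ (swap k l).support := by
    by_contra hj
    exact hij (hij'.eq_of_right (notMem_support.mp hj))
  rw [support_swap hkl, Finset.mem_insert, Finset.mem_singleton] at hi hj
  rcases hi with rfl | rfl <;> rcases hj with rfl | rfl
  exacts [absurd rfl hij, rfl, swap_comm _ _, absurd rfl hij]

theorem typeA_building_embedding_general (n : ℕ) :
    (∀ t t' L L', lineOfA n t L → lineOfA n t' L' → L = L' → t = t') ∧
    (∀ v ∈ NC (ST n) (finRotate n), ∀ w ∈ NC (ST n) (finRotate n),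
       absLe (ST n) v w → FA n v ≤ FA n w) ∧
    (∀ w ∈ NC (ST n) (finRotate n),
       Module.finrank (ZMod 2) (FA n w) = lenT (ST n) w) ∧
    (∀ v ∈ NC (ST n) (finRotate n), ∀ w ∈ NC (ST n) (finRotate n),
       FA n v = FA n w → v = w) := by
  refine ⟨?_, fun v _ w _ hvw => ?_, fun w _ => ?_, fun v hv w hw h => ?_⟩
  · rintro t t' L L' ⟨i, j, hij, rfl, rfl⟩ ⟨k, l, hkl, rfl, rfl⟩ hLL
    exact swap_eq_of_vvec_add_mem_mov_swap hij hkl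
      (mov_swap k l ▸ hLL ▸ mem_span_singleton_self _)
  · exact sSup_le_sSup fun L ⟨t, ht, htv⟩ => ⟨t, ht, absLe_trans (closure_ST n) htv hvw⟩
  · rw [FA_eq_mov, lenT_eq_finrank_mov]
  · rw [FA_eq_mov, FA_eq_mov] at h
    exact eq_of_mov_eq_of_absLe_finRotate hv hw h

/-- `f'` is injective on transpositions, and `F` is an order-preserving,
rank-preserving, injective map from `NC(S_n)` to the subspace lattice of `𝔽₂^{n-1}`. -/
theorem typeA_building_embedding (n : ℕ) (hn : 2 ≤ n) :
    (∀ t t' L L', lineOfA n t L → lineOfA n t' L' → L = L' → t = t') ∧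
    (∀ v ∈ NC (ST n) (finRotate n), ∀ w ∈ NC (ST n) (finRotate n),
       absLe (ST n) v w → FA n v ≤ FA n w) ∧
    (∀ w ∈ NC (ST n) (finRotate n),
       Module.finrank (ZMod 2) (FA n w) = lenT (ST n) w) ∧
    (∀ v ∈ NC (ST n) (finRotate n), ∀ w ∈ NC (ST n) (finRotate n),
       FA n v = FA n w → v = w) :=
  typeA_building_embedding_general n

end NCPaper
end

section
/- Let K be a field, m ≥ 2, and V an m-dimensional K-vector space. Let Γ be the simple graph whose vertices are the complete flags V_1 ⊂ V_2 ⊂ ⋯ ⊂ V_{m−1} of linear subspaces of V with dim V_i = i, two distinct flags being adjacent iff they differ in exactly one subspace. Then Γ is connected and every vertex of Γ has eccentricity exactly m(m−1)/2; in particular the diameter and the radius of Γ both equal binom(m,2). -/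
/-!
The relative position of two complete flags `A`, `B` is a permutation `σ` of `{1, …, m}`,
characterised by `dim (A_i ∩ B_j) = #{t ≤ i | σ t ≤ j}`, and the graph distance from `A` to `B`
is the number of inversions of `σ`. Adjacent flags differ in a single member `A_k`; the rows
`k - 1` and `k + 1` of the dimension table do not change, so `σ` either stays or is composed with
the transposition `(k k+1)`, and the number of inversions drops by at most one per step.
Conversely, at a descent `σ (k + 1) < σ k` replacing `A_k` by `A_{k-1} + (A_{k+1} ∩ B_{σ (k+1)})`
performs exactly this transposition, so walking along descents reaches `B` in that many steps.
The number of inversions is at most `m.choose 2`, with equality for the flag spanned by the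
reversed basis adapted to `A`.
-/

namespace NCPaper

/-- A complete flag `V_1 ⊂ V_2 ⊂ ⋯ ⊂ V_{m-1}` of subspaces of an `m`-dimensional
vector space `V`, recorded as the function sending `i : Fin (m-1)` to the subspace of
dimension `i+1`. -/
def IsCompleteFlagOf (K : Type*) [Field K] {V : Type*} [AddCommGroup V] [Module K V]
    (m : ℕ) (fl : Fin (m-1) → Submodule K V) : Prop :=
  (∀ i : Fin (m-1), Module.finrank K (fl i) = i.val + 1) ∧
  (∀ i j : Fin (m-1), i ≤ j → fl i ≤ fl j)

/-- The graph whose vertices are the complete flags of `V`, two distinct flags being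
adjacent iff they differ in exactly one subspace. -/
def flagGraphOf (K : Type*) [Field K] (V : Type*) [AddCommGroup V] [Module K V]
    (m : ℕ) : SimpleGraph {fl : Fin (m-1) → Submodule K V // IsCompleteFlagOf K m fl} where
  Adj a b := ∃! i, a.1 i ≠ b.1 i
  symm := by
    constructor
    rintro a b ⟨i, hi, hu⟩
    exact ⟨i, hi.symm, fun j hj => hu j hj.symm⟩
  loopless := by constructor; rintro a ⟨i, hi, _⟩; exact hi rfl

section Development

open Finset

theorem pair_eq_of_forall_ite_le {a b c d : ℕ}
    (h : ∀ j, ((if a ≤ j then 1 else 0) + if b ≤ j then 1 else 0) =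
      (if c ≤ j then 1 else 0) + if d ≤ j then 1 else 0) :
    (a = c ∧ b = d) ∨ (a = d ∧ b = c) := by
  have hmin : min a b = min c d := eq_of_forall_ge_iff fun j => by
    have := h j
    split_ifs at this <;> omega
  have hmax : max a b = max c d := eq_of_forall_ge_iff fun j => by
    have := h j
    split_ifs at this <;> omega
  omega

def inversions (m : ℕ) (σ : ℕ → ℕ) : ℕ :=
  #{p ∈ Icc 1 m ×ˢ Icc 1 m | p.1 < p.2 ∧ σ p.2 < σ p.1}

theorem card_filter_lt_Icc_product (m : ℕ) :
    #{p ∈ Icc 1 m ×ˢ Icc 1 m | p.1 < p.2} = m.choose 2 := by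
  induction m with
  | zero => rfl
  | succ m ih =>
    have hsplit : {p ∈ Icc 1 (m + 1) ×ˢ Icc 1 (m + 1) | p.1 < p.2} =
        {p ∈ Icc 1 m ×ˢ Icc 1 m | p.1 < p.2} ∪ Icc 1 m ×ˢ {m + 1} := by
      ext ⟨a, b⟩
      simp only [mem_filter, mem_product, mem_Icc, mem_union, mem_singleton]
      omega
    have hdisj : Disjoint {p ∈ Icc 1 m ×ˢ Icc 1 m | p.1 < p.2} (Icc 1 m ×ˢ {m + 1}) := by
      simp only [disjoint_left, mem_filter, mem_product, mem_Icc, mem_singleton]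
      omega
    rw [hsplit, card_union_of_disjoint hdisj, ih, card_product, Nat.card_Icc, card_singleton,
      Nat.choose_two_right, Nat.choose_two_right, Nat.triangle_succ]
    omega

theorem inversions_le_choose (m : ℕ) (σ : ℕ → ℕ) : inversions m σ ≤ m.choose 2 :=
  card_filter_lt_Icc_product m ▸ card_le_card fun _ hp =>
    mem_filter.2 ⟨(mem_filter.1 hp).1, (mem_filter.1 hp).2.1⟩

theorem inversions_rev (m : ℕ) : inversions m (fun i => m + 1 - i) = m.choose 2 := by
  rw [← card_filter_lt_Icc_product, inversions]
  congr 1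
  refine filter_congr fun p hp => ?_
  simp only [mem_product, mem_Icc] at hp
  omega

theorem inversions_congr {m : ℕ} {σ τ : ℕ → ℕ} (h : ∀ i ∈ Icc 1 m, σ i = τ i) :
    inversions m σ = inversions m τ := by
  unfold inversions
  congr 1
  refine filter_congr fun p hp => ?_
  rw [mem_product] at hp
  rw [h _ hp.1, h _ hp.2]

theorem inversions_eq_zero_of_forall_eq_self {m : ℕ} {σ : ℕ → ℕ} (h : ∀ i ∈ Icc 1 m, σ i = i) :
    inversions m σ = 0 := by
  rw [inversions_congr h, inversions, card_eq_zero, filter_eq_empty_iff]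
  omega

theorem inversions_comp_swap {m k : ℕ} {σ : ℕ → ℕ} (hk : 1 ≤ k) (hkm : k + 1 ≤ m)
    (h : σ k < σ (k + 1)) :
    inversions m (σ ∘ Equiv.swap k (k + 1)) = inversions m σ + 1 := by
  set τ := Equiv.swap k (k + 1)
  have himage : {p ∈ Icc 1 m ×ˢ Icc 1 m | p.1 < p.2 ∧ (σ ∘ τ) p.2 < (σ ∘ τ) p.1}.map
      (τ.prodCongr τ).toEmbedding =
      insert (k + 1, k) {p ∈ Icc 1 m ×ˢ Icc 1 m | p.1 < p.2 ∧ σ p.2 < σ p.1} := by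
    ext ⟨a, b⟩
    simp only [mem_map_equiv, Equiv.prodCongr_symm, Equiv.prodCongr_apply, Prod.map,
      Equiv.symm_swap, τ, mem_filter, mem_product, mem_Icc, Function.comp, Equiv.swap_apply_self,
      mem_insert, Prod.mk.injEq]
    rw [Equiv.swap_apply_def, Equiv.swap_apply_def]
    split_ifs <;> subst_vars <;> omega
  rw [inversions, inversions, ← card_map, himage, card_insert_of_notMem]
  simp only [mem_filter]
  omega

theorem inversions_comp_swap_add_one {m k : ℕ} {σ : ℕ → ℕ} (hk : 1 ≤ k) (hkm : k + 1 ≤ m)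
    (h : σ (k + 1) < σ k) :
    inversions m (σ ∘ Equiv.swap k (k + 1)) + 1 = inversions m σ := by
  have hσ : σ ∘ Equiv.swap k (k + 1) ∘ Equiv.swap k (k + 1) = σ := by
    ext
    simp
  have := inversions_comp_swap (σ := σ ∘ Equiv.swap k (k + 1)) hk hkm (by simpa using h)
  rwa [Function.comp_assoc, hσ, eq_comm] at this

theorem inversions_le_inversions_comp_swap_add_one {m k : ℕ} (σ : ℕ → ℕ) (hk : 1 ≤ k)
    (hkm : k + 1 ≤ m) : inversions m σ ≤ inversions m (σ ∘ Equiv.swap k (k + 1)) + 1 := by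
  rcases lt_trichotomy (σ k) (σ (k + 1)) with hlt | heq | hgt
  · rw [inversions_comp_swap hk hkm hlt]
    omega
  · have : σ ∘ Equiv.swap k (k + 1) = σ := by
      ext i
      simp only [Function.comp, Equiv.swap_apply_def]
      split_ifs <;> simp_all
    rw [this]
    omega
  · rw [← inversions_comp_swap_add_one hk hkm hgt]

theorem exists_descent_of_inversions_pos {m : ℕ} {σ : ℕ → ℕ} (h : 0 < inversions m σ) :
    ∃ k, 1 ≤ k ∧ k + 1 ≤ m ∧ σ (k + 1) < σ k := by
  by_contra! hno
  have hmono : MonotoneOn σ (Set.Icc 1 m) :=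
    monotoneOn_of_le_succ Set.ordConnected_Icc fun k _ hk hk1 => by
      simp only [Order.succ_eq_add_one, Set.mem_Icc] at hk hk1 ⊢
      exact hno k hk.1 hk1.2
  obtain ⟨p, hp⟩ := card_pos.1 h
  simp only [mem_filter, mem_product, mem_Icc] at hp
  exact (hmono ⟨hp.1.1.1, hp.1.1.2⟩ ⟨hp.1.2.1, hp.1.2.2⟩ hp.2.1.le).not_gt hp.2.2

theorem inversions_pos_of_card_lt {m i : ℕ} {σ : ℕ → ℕ}
    (hlt : #{t ∈ Icc 1 i | σ t ≤ i} < i) (hle : i ≤ #{t ∈ Icc 1 m | σ t ≤ i}) :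
    0 < inversions m σ := by
  obtain ⟨t, ht, hσt⟩ : ∃ t ∈ Icc 1 i, i < σ t := by
    by_contra! h
    rw [filter_true_of_mem h, Nat.card_Icc] at hlt
    omega
  obtain ⟨s, hs, hσs, his⟩ : ∃ s ∈ Icc 1 m, σ s ≤ i ∧ i < s := by
    by_contra! h
    have hsub : {t ∈ Icc 1 m | σ t ≤ i} ⊆ {t ∈ Icc 1 i | σ t ≤ i} := by
      intro s hs
      simp only [mem_filter, mem_Icc] at hs ⊢
      exact ⟨⟨hs.1.1, h s (mem_Icc.2 hs.1) hs.2⟩, hs.2⟩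
    have := card_le_card hsub
    omega
  rw [mem_Icc] at ht hs
  exact card_pos.2 ⟨(t, s), by simp only [mem_filter, mem_product, mem_Icc]; omega⟩

open Module Submodule

def IsFullChain (K : Type*) {V : Type*} [Field K] [AddCommGroup V] [Module K V] (m : ℕ)
    (A : ℕ → Submodule K V) : Prop :=
  Monotone A ∧ ∀ i ≤ m, finrank K (A i) = i

variable {K V : Type*} [Field K] [AddCommGroup V] [Module K V]

theorem finrank_inf_add_finrank_inf_le [FiniteDimensional K V] {X Y W W' : Submodule K V}
    (hXY : X ≤ Y) (hWW' : W ≤ W') :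
    finrank K ↥(Y ⊓ W) + finrank K ↥(X ⊓ W') ≤ finrank K ↥(Y ⊓ W') + finrank K ↥(X ⊓ W) := by
  have hinf : Y ⊓ W ⊓ (X ⊓ W') = X ⊓ W := by
    rw [inf_inf_inf_comm, inf_eq_right.2 hXY, inf_eq_left.2 hWW']
  have hsup : Y ⊓ W ⊔ X ⊓ W' ≤ Y ⊓ W' := sup_le (inf_le_inf_left Y hWW') (inf_le_inf_right W' hXY)
  have := finrank_sup_add_finrank_inf_eq (Y ⊓ W) (X ⊓ W')
  have := finrank_mono hsup
  rw [hinf] at *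
  omega

namespace IsFullChain

variable {m : ℕ} {A : ℕ → Submodule K V}

theorem eq_bot [FiniteDimensional K V] (hA : IsFullChain K m A) : A 0 = ⊥ :=
  Submodule.finrank_eq_zero.1 (hA.2 0 (Nat.zero_le m))

theorem eq_top [FiniteDimensional K V] (hA : IsFullChain K m A) (hV : finrank K V = m) :
    A m = ⊤ :=
  eq_top_of_finrank_eq (by rw [hA.2 m le_rfl, hV])

theorem finrank_succ_inf_le [FiniteDimensional K V] (hA : IsFullChain K m A) {i : ℕ}
    (hi : i + 1 ≤ m) (W : Submodule K V) :
    finrank K ↥(A (i + 1) ⊓ W) ≤ finrank K ↥(A i ⊓ W) + 1 := by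
  have := finrank_inf_add_finrank_inf_le (hA.1 (by omega : i ≤ i + 1)) (le_top : W ≤ ⊤)
  rw [inf_top_eq, inf_top_eq, hA.2 i (by omega), hA.2 (i + 1) hi] at this
  omega

theorem update (hA : IsFullChain K m A) {k : ℕ} {N : Submodule K V} (hN : finrank K N = k)
    (hlo : A (k - 1) ≤ N) (hhi : N ≤ A (k + 1)) : IsFullChain K m (Function.update A k N) := by
  refine ⟨monotone_nat_of_le_succ fun i => ?_, fun i hi => ?_⟩
  · simp only [Function.update_apply]
    split_ifs with h1 h2 h2
    · omega
    · exact h1 ▸ hhi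
    · exact (show i = k - 1 by omega) ▸ hlo
    · exact hA.1 i.le_succ
  · by_cases h : i = k
    · rwa [h, Function.update_self]
    · rw [Function.update_of_ne h]
      exact hA.2 i hi

end IsFullChain

noncomputable def meetRank (A B : ℕ → Submodule K V) (i j : ℕ) : ℕ :=
  finrank K ↥(A i ⊓ B j)

-- For full chains, `jump A B` is the permutation giving the relative position of the two flags.
noncomputable def jump (A B : ℕ → Submodule K V) (i : ℕ) : ℕ :=
  sInf {j | meetRank A B (i - 1) j < meetRank A B i j}

section Jump

variable {m : ℕ} {A A' B B' : ℕ → Submodule K V}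

theorem meetRank_self (hA : IsFullChain K m A) {i j : ℕ} (hi : i ≤ m) (hj : j ≤ m) :
    meetRank A A i j = min i j := by
  rcases le_total i j with h | h
  · rw [meetRank, inf_eq_left.2 (hA.1 h), hA.2 i hi, min_eq_left h]
  · rw [meetRank, inf_eq_right.2 (hA.1 h), hA.2 j hj, min_eq_right h]

theorem jump_congr_left {i : ℕ} (h : A' i = A i) (h' : A' (i - 1) = A (i - 1)) :
    jump A' B i = jump A B i := by
  unfold jump meetRank
  rw [h, h']

variable [FiniteDimensional K V]

theorem meetRank_pred_lt_meetRank_top (hA : IsFullChain K m A) (hB : IsFullChain K m B)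
    (hV : finrank K V = m) {i : ℕ} (hi : 1 ≤ i) (him : i ≤ m) :
    meetRank A B (i - 1) m < meetRank A B i m := by
  rw [meetRank, meetRank, hB.eq_top hV, inf_top_eq, inf_top_eq, hA.2 i him,
    hA.2 (i - 1) (by omega)]
  omega

theorem jump_le (hA : IsFullChain K m A) (hB : IsFullChain K m B) (hV : finrank K V = m)
    {i : ℕ} (hi : 1 ≤ i) (him : i ≤ m) : jump A B i ≤ m :=
  Nat.sInf_le (meetRank_pred_lt_meetRank_top hA hB hV hi him)

theorem meetRank_eq_add_ite (hA : IsFullChain K m A) (hB : IsFullChain K m B)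
    (hV : finrank K V = m) {i : ℕ} (hi : 1 ≤ i) (him : i ≤ m) (j : ℕ) :
    meetRank A B i j = meetRank A B (i - 1) j + if jump A B i ≤ j then 1 else 0 := by
  have hmono : meetRank A B (i - 1) j ≤ meetRank A B i j :=
    finrank_mono (inf_le_inf_right _ (hA.1 (Nat.sub_le i 1)))
  have hstep : meetRank A B i j ≤ meetRank A B (i - 1) j + 1 := by
    have := hA.finrank_succ_inf_le (i := i - 1) (by omega) (B j)
    rwa [Nat.sub_add_cancel hi] at this
  split_ifs with hj
  · have hjump : meetRank A B (i - 1) (jump A B i) < meetRank A B i (jump A B i) :=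
      Nat.sInf_mem (⟨m, meetRank_pred_lt_meetRank_top hA hB hV hi him⟩ :
        {j | meetRank A B (i - 1) j < meetRank A B i j}.Nonempty)
    -- submodularity carries the jump at column `jump A B i` to every later column
    have := finrank_inf_add_finrank_inf_le (hA.1 (Nat.sub_le i 1)) (hB.1 hj)
    change meetRank A B i _ + meetRank A B (i - 1) j ≤ meetRank A B i j + meetRank A B (i - 1) _
      at this
    omega
  · have : ¬ meetRank A B (i - 1) j < meetRank A B i j :=
      Nat.notMem_of_lt_sInf (s := {j | meetRank A B (i - 1) j < meetRank A B i j}) (not_le.1 hj)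
    omega

theorem meetRank_eq_card (hA : IsFullChain K m A) (hB : IsFullChain K m B)
    (hV : finrank K V = m) {i : ℕ} (hi : i ≤ m) (j : ℕ) :
    meetRank A B i j = #{t ∈ Icc 1 i | jump A B t ≤ j} := by
  induction i with
  | zero => simp [meetRank, hA.eq_bot]
  | succ i ih =>
    rw [meetRank_eq_add_ite hA hB hV (by omega) hi, Nat.add_sub_cancel, ih (by omega),
      card_filter, card_filter, sum_Icc_succ_top (by omega)]

theorem jump_eq_of_meetRank (hA : IsFullChain K m A) (hB : IsFullChain K m B)
    (hV : finrank K V = m) {i j : ℕ} (hi : 1 ≤ i) (him : i ≤ m) (hj : j ≤ m)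
    (h : ∀ j' ≤ m, meetRank A B i j' = meetRank A B (i - 1) j' + if j ≤ j' then 1 else 0) :
    jump A B i = j := by
  have key : ∀ j' ≤ m, jump A B i ≤ j' ↔ j ≤ j' := fun j' hj' => by
    have := h j' hj'
    rw [meetRank_eq_add_ite hA hB hV hi him] at this
    split_ifs at this <;> omega
  exact le_antisymm ((key j hj).2 le_rfl) ((key _ (jump_le hA hB hV hi him)).1 le_rfl)

theorem jump_congr_right (hA : IsFullChain K m A) (hB : IsFullChain K m B)
    (hB' : IsFullChain K m B') (hV : finrank K V = m) {i : ℕ} (hi : 1 ≤ i) (him : i ≤ m)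
    (h : ∀ j ≤ m, B' j = B j) : jump A B' i = jump A B i :=
  jump_eq_of_meetRank hA hB' hV hi him (jump_le hA hB hV hi him) fun j hj => by
    rw [meetRank, meetRank, h j hj]
    exact meetRank_eq_add_ite hA hB hV hi him j

theorem jump_self (hA : IsFullChain K m A) (hV : finrank K V = m) {i : ℕ} (hi : 1 ≤ i)
    (him : i ≤ m) : jump A A i = i :=
  jump_eq_of_meetRank hA hA hV hi him him fun j hj => by
    rw [meetRank_self hA him hj, meetRank_self hA (by omega) hj]
    split_ifs <;> omega

theorem jump_eq_or_eq_comp_swap (hA : IsFullChain K m A) (hA' : IsFullChain K m A')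
    (hB : IsFullChain K m B) (hV : finrank K V = m) {k : ℕ} (hk : 1 ≤ k) (hkm : k + 1 ≤ m)
    (hagree : ∀ i ≤ m, i ≠ k → A' i = A i) :
    (∀ i ∈ Icc 1 m, jump A' B i = jump A B i) ∨
      ∀ i ∈ Icc 1 m, jump A' B i = (jump A B ∘ Equiv.swap k (k + 1)) i := by
  have hoff : ∀ i ∈ Icc 1 m, i ≠ k → i ≠ k + 1 → jump A' B i = jump A B i := by
    intro i hi h1 h2
    rw [mem_Icc] at hi
    exact jump_congr_left (hagree i hi.2 h1) (hagree (i - 1) (by omega) (by omega))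
  -- rows `k - 1` and `k + 1` are unchanged, which pins down `{σ k, σ (k + 1)}`
  have hpair : (jump A' B k = jump A B k ∧ jump A' B (k + 1) = jump A B (k + 1)) ∨
      (jump A' B k = jump A B (k + 1) ∧ jump A' B (k + 1) = jump A B k) := by
    refine pair_eq_of_forall_ite_le fun j => ?_
    have h1 := meetRank_eq_add_ite hA' hB hV hk (by omega) j
    have h2 := meetRank_eq_add_ite hA' hB hV (i := k + 1) (by omega) hkm j
    have h3 := meetRank_eq_add_ite hA hB hV hk (by omega) j
    have h4 := meetRank_eq_add_ite hA hB hV (i := k + 1) (by omega) hkm j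
    have e1 : meetRank A' B (k + 1) j = meetRank A B (k + 1) j := by
      rw [meetRank, meetRank, hagree _ hkm (by omega)]
    have e2 : meetRank A' B (k - 1) j = meetRank A B (k - 1) j := by
      rw [meetRank, meetRank, hagree _ (by omega) (by omega)]
    rw [Nat.add_sub_cancel] at h2 h4
    omega
  rcases hpair with ⟨h1, h2⟩ | ⟨h1, h2⟩
  · refine .inl fun i hi => ?_
    by_cases hik : i = k
    · exact hik ▸ h1
    by_cases hik' : i = k + 1
    · exact hik' ▸ h2
    exact hoff i hi hik hik'
  · refine .inr fun i hi => ?_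
    rw [Function.comp_apply, Equiv.swap_apply_def]
    split_ifs with hik hik'
    · exact hik ▸ h1
    · exact hik' ▸ h2
    · exact hoff i hi hik hik'

theorem exists_update_jump_eq_comp_swap (hA : IsFullChain K m A) (hB : IsFullChain K m B)
    (hV : finrank K V = m) {k : ℕ} (hk : 1 ≤ k) (hkm : k + 1 ≤ m)
    (hdesc : jump A B (k + 1) < jump A B k) :
    ∃ N : Submodule K V, IsFullChain K m (Function.update A k N) ∧
      ∀ i ∈ Icc 1 m, jump (Function.update A k N) B i = (jump A B ∘ Equiv.swap k (k + 1)) i := by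
  set v := jump A B (k + 1)
  set N := A (k - 1) ⊔ A (k + 1) ⊓ B v
  have hrise : meetRank A B (k + 1) v = meetRank A B k v + 1 := by
    have := meetRank_eq_add_ite hA hB hV (i := k + 1) (by omega) hkm v
    rwa [if_pos le_rfl, Nat.add_sub_cancel] at this
  have hflat : meetRank A B k v = meetRank A B (k - 1) v := by
    simpa [not_le.2 hdesc] using meetRank_eq_add_ite hA hB hV hk (by omega) v
  have hN : finrank K N = k := by
    have := finrank_sup_add_finrank_inf_eq (A (k - 1)) (A (k + 1) ⊓ B v)
    rw [← inf_assoc, inf_eq_left.2 (hA.1 (by omega : k - 1 ≤ k + 1)), hA.2 (k - 1) (by omega)]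
      at this
    change finrank K N + meetRank A B (k - 1) v = k - 1 + meetRank A B (k + 1) v at this
    omega
  have hC := hA.update hN le_sup_left (sup_le (hA.1 (by omega)) inf_le_left)
  refine ⟨N, hC, ?_⟩
  -- `N` meets `B v` in one dimension more than `A k` does, so the jumps cannot stay put
  refine (jump_eq_or_eq_comp_swap hA hC hB hV hk hkm
    fun i _ hik => Function.update_of_ne hik _ _).resolve_left fun hsame => ?_
  have hbig : meetRank A B (k + 1) v ≤ meetRank (Function.update A k N) B k v := by
    rw [meetRank, meetRank, Function.update_self]
    exact finrank_mono (le_inf le_sup_right inf_le_right)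
  have hkeep : meetRank (Function.update A k N) B k v = meetRank A B k v := by
    rw [meetRank_eq_card hC hB hV (by omega), meetRank_eq_card hA hB hV (by omega)]
    congr 1
    refine filter_congr fun t ht => ?_
    rw [hsame t (Icc_subset_Icc_right (by omega) ht)]
  omega

end Jump

section Span

variable {m : ℕ}

theorem finrank_span_image_le_card (e : ℕ → V) (s : Finset ℕ) :
    finrank K (span K (e '' s)) ≤ #s := by
  classical
  rw [← coe_image]
  exact (finrank_span_finset_le_card _).trans card_image_le

variable [FiniteDimensional K V]

theorem finrank_span_image_eq_card {e : ℕ → V} (htop : span K (e '' range m) = ⊤)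
    (hV : finrank K V = m) {s : Finset ℕ} (hs : s ⊆ range m) :
    finrank K (span K (e '' s)) = #s := by
  have hcover : span K (e '' s) ⊔ span K (e '' ↑(range m \ s)) = ⊤ := by
    rw [← span_union, ← Set.image_union, ← coe_union, union_sdiff_of_subset hs, htop]
  have := finrank_sup_add_finrank_inf_eq (span K (e '' s)) (span K (e '' ↑(range m \ s)))
  rw [hcover, finrank_top, hV] at this
  have h1 := finrank_span_image_le_card (K := K) e s
  have h2 := finrank_span_image_le_card (K := K) e (range m \ s)
  have h3 := card_le_card hs
  rw [card_sdiff_of_subset hs] at h2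
  rw [card_range] at h2 h3
  omega

theorem finrank_span_image_inf {e : ℕ → V} (htop : span K (e '' range m) = ⊤)
    (hV : finrank K V = m) {s t : Finset ℕ} (hs : s ⊆ range m) (ht : t ⊆ range m) :
    finrank K ↥(span K (e '' s) ⊓ span K (e '' t)) = #(s ∩ t) := by
  have := finrank_sup_add_finrank_inf_eq (span K (e '' s)) (span K (e '' t))
  rw [← span_union, ← Set.image_union, ← coe_union,
    finrank_span_image_eq_card htop hV (union_subset hs ht), finrank_span_image_eq_card htop hV hs,
    finrank_span_image_eq_card htop hV ht] at this
  have := card_union_add_card_inter s t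
  omega

theorem IsFullChain.exists_eq_span {A : ℕ → Submodule K V} (hA : IsFullChain K m A) :
    ∃ e : ℕ → V, ∀ i ≤ m, A i = span K (e '' range i) := by
  have hgap : ∀ t < m, ∃ x ∈ A (t + 1), x ∉ A t := fun t ht =>
    SetLike.exists_of_lt <| (hA.1 t.le_succ).lt_of_ne fun h => by
      have := hA.2 t ht.le
      rw [h, hA.2 (t + 1) ht] at this
      omega
  choose! e he using hgap
  refine ⟨e, fun i => ?_⟩
  induction i with
  | zero => intro _; rw [range_zero, coe_empty, Set.image_empty, span_empty, hA.eq_bot]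
  | succ i ih =>
    intro hi
    rw [range_add_one, coe_insert, Set.image_insert_eq, span_insert, ← ih (by omega)]
    have hlt : A i < K ∙ e i ⊔ A i := (covBy_span_singleton_sup (he i hi).2).lt
    have hle : K ∙ e i ⊔ A i ≤ A (i + 1) :=
      sup_le ((span_singleton_le_iff_mem _ _).2 (he i hi).1) (hA.1 i.le_succ)
    refine (eq_of_le_of_finrank_le hle ?_).symm
    have := finrank_lt_finrank_of_lt hlt
    rw [hA.2 i (by omega)] at this
    rw [hA.2 (i + 1) hi]
    omega

theorem IsFullChain.exists_jump_eq_rev {A : ℕ → Submodule K V} (hA : IsFullChain K m A)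
    (hV : finrank K V = m) : ∃ B, IsFullChain K m B ∧ ∀ i ∈ Icc 1 m, jump A B i = m + 1 - i := by
  obtain ⟨e, he⟩ := hA.exists_eq_span
  have htop : span K (e '' range m) = ⊤ := he m le_rfl ▸ hA.eq_top hV
  have hIco : ∀ j, Ico (m - j) m ⊆ range m := fun j x hx => by
    simp only [mem_Ico, mem_range] at hx ⊢
    omega
  -- the last `j` vectors of a basis adapted to `A`; below, `i + j - m` truncates at `0`
  set B : ℕ → Submodule K V := fun j => span K (e '' ↑(Ico (m - j) m))
  have hB : IsFullChain K m B := by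
    refine ⟨fun j j' h => span_mono (Set.image_mono (coe_subset.2 ?_)), fun j hj => ?_⟩
    · exact Ico_subset_Ico (by omega) le_rfl
    · rw [finrank_span_image_eq_card htop hV (hIco j), Nat.card_Ico]
      omega
  have hd : ∀ i ≤ m, ∀ j ≤ m, meetRank A B i j = i + j - m := by
    intro i hi j hj
    rw [meetRank, he i hi, finrank_span_image_inf htop hV (range_subset_range.2 hi) (hIco j),
      range_eq_Ico, Ico_inter_Ico, Nat.card_Ico]
    omega
  refine ⟨B, hB, fun i hi => ?_⟩
  rw [mem_Icc] at hi
  exact jump_eq_of_meetRank hA hB hV hi.1 hi.2 (by omega) fun j hj => by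
    rw [hd i hi.2 j hj, hd (i - 1) (by omega) j hj]
    split_ifs <;> omega

theorem exists_isFullChain (hV : finrank K V = m) :
    ∃ A : ℕ → Submodule K V, IsFullChain K m A := by
  let b := Module.finBasis K V
  let e : ℕ → V := fun t => if h : t < finrank K V then b ⟨t, h⟩ else 0
  have htop : span K (e '' range m) = ⊤ := by
    rw [eq_top_iff, ← b.span_eq]
    refine span_mono ?_
    rintro _ ⟨i, rfl⟩
    exact ⟨i, by simp [← hV], by simp [e]⟩
  refine ⟨fun i => span K (e '' range i), fun i j h => ?_, fun i hi => ?_⟩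
  · exact span_mono (Set.image_mono (coe_subset.2 (range_subset_range.2 h)))
  · rw [finrank_span_image_eq_card htop hV (range_subset_range.2 hi), card_range]

end Span

section Flag

variable {m : ℕ}

def flagExt (m : ℕ) (fl : Fin (m - 1) → Submodule K V) (i : ℕ) : Submodule K V :=
  if h₀ : i = 0 then ⊥ else if h : i < m then fl ⟨i - 1, by omega⟩ else ⊤

theorem flagExt_succ (fl : Fin (m - 1) → Submodule K V) (t : Fin (m - 1)) :
    flagExt m fl (t + 1) = fl t := by
  rw [flagExt, dif_neg t.val.succ_ne_zero, dif_pos (by omega)]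
  rfl

theorem flagExt_congr {fl fl' : Fin (m - 1) → Submodule K V} {i : ℕ}
    (h : ∀ t : Fin (m - 1), t.val + 1 = i → fl t = fl' t) : flagExt m fl i = flagExt m fl' i := by
  unfold flagExt
  split_ifs
  · rfl
  · exact h _ (by simp only; omega)
  · rfl

theorem isFullChain_flagExt {fl : Fin (m - 1) → Submodule K V} (hfl : IsCompleteFlagOf K m fl)
    (hV : finrank K V = m) : IsFullChain K m (flagExt m fl) := by
  refine ⟨monotone_nat_of_le_succ fun i => ?_, fun i hi => ?_⟩
  · unfold flagExt
    split_ifs <;> first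
      | contradiction | omega | exact bot_le | exact le_top | exact le_rfl
      | exact hfl.2 _ _ (Fin.mk_le_mk.2 (by omega))
  · rcases Nat.eq_zero_or_pos i with rfl | hpos
    · rw [flagExt, dif_pos rfl, finrank_bot]
    rcases hi.lt_or_eq with hlt | rfl
    · rw [flagExt, dif_neg hpos.ne', dif_pos hlt, hfl.1]
      simp only
      omega
    · rw [flagExt, dif_neg hpos.ne', dif_neg (lt_irrefl _), finrank_top, hV]

theorem isCompleteFlagOf_of_isFullChain {C : ℕ → Submodule K V} (hC : IsFullChain K m C) :
    IsCompleteFlagOf K m fun t => C (t + 1) :=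
  ⟨fun t => hC.2 _ (by omega), fun s t h => hC.1 (by have := Fin.le_def.1 h; omega)⟩

theorem flagExt_of_isFullChain [FiniteDimensional K V] {C : ℕ → Submodule K V}
    (hC : IsFullChain K m C) (hV : finrank K V = m) {i : ℕ} (hi : i ≤ m) :
    flagExt m (fun t => C (t + 1)) i = C i := by
  rcases Nat.eq_zero_or_pos i with rfl | hpos
  · rw [flagExt, dif_pos rfl, hC.eq_bot]
  rcases hi.lt_or_eq with hlt | rfl
  · rw [flagExt, dif_neg hpos.ne', dif_pos hlt, Nat.sub_add_cancel hpos]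
  · rw [flagExt, dif_neg hpos.ne', dif_neg (lt_irrefl _), hC.eq_top hV]

theorem flagGraphOf_adj_iff {A A' : {fl : Fin (m - 1) → Submodule K V // IsCompleteFlagOf K m fl}} :
    (flagGraphOf K V m).Adj A A' ↔ ∃ k, 1 ≤ k ∧ k + 1 ≤ m ∧
      flagExt m A.1 k ≠ flagExt m A'.1 k ∧ ∀ i ≠ k, flagExt m A.1 i = flagExt m A'.1 i := by
  constructor
  · rintro ⟨t, hne, huniq⟩
    refine ⟨t + 1, by omega, by omega, by rwa [flagExt_succ, flagExt_succ], fun i hi => ?_⟩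
    refine flagExt_congr fun s hs => ?_
    by_contra h
    exact hi (hs ▸ huniq s h ▸ rfl)
  · rintro ⟨k, hk, hkm, hne, heq⟩
    have hsucc : ((⟨k - 1, by omega⟩ : Fin (m - 1)) : ℕ) + 1 = k := by simp only; omega
    refine ⟨⟨k - 1, by omega⟩, ?_, fun s hs => ?_⟩
    · show A.1 _ ≠ A'.1 _
      rwa [← flagExt_succ A.1, ← flagExt_succ A'.1, hsucc]
    · by_contra h
      refine hs ?_
      rw [← flagExt_succ A.1, ← flagExt_succ A'.1]
      exact heq _ fun e => h (Fin.ext (by simp only; omega))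

end Flag

section Distance

variable {m : ℕ}

-- the length of the Weyl distance from `A` to `B`
noncomputable def flagInversions
    (A B : {fl : Fin (m - 1) → Submodule K V // IsCompleteFlagOf K m fl}) : ℕ :=
  inversions m (jump (flagExt m A.1) (flagExt m B.1))

variable [FiniteDimensional K V]
  {A A' B : {fl : Fin (m - 1) → Submodule K V // IsCompleteFlagOf K m fl}}

theorem flagInversions_self (hV : finrank K V = m)
    (A : {fl : Fin (m - 1) → Submodule K V // IsCompleteFlagOf K m fl}) :
    flagInversions A A = 0 :=
  inversions_eq_zero_of_forall_eq_self fun _ hi =>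
    jump_self (isFullChain_flagExt A.2 hV) hV (mem_Icc.1 hi).1 (mem_Icc.1 hi).2

theorem flagInversions_le_of_adj (hV : finrank K V = m) (h : (flagGraphOf K V m).Adj A A')
    (B : {fl : Fin (m - 1) → Submodule K V // IsCompleteFlagOf K m fl}) :
    flagInversions A B ≤ flagInversions A' B + 1 := by
  obtain ⟨k, hk, hkm, -, hagree⟩ := flagGraphOf_adj_iff.1 h
  rcases jump_eq_or_eq_comp_swap (isFullChain_flagExt A.2 hV) (isFullChain_flagExt A'.2 hV)
    (isFullChain_flagExt B.2 hV) hV hk hkm fun i _ hi => (hagree i hi).symm with h | h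
  · rw [flagInversions, flagInversions, inversions_congr h]
    omega
  · rw [flagInversions, flagInversions, inversions_congr h]
    exact inversions_le_inversions_comp_swap_add_one _ hk hkm

theorem flagInversions_le_length (hV : finrank K V = m) (p : (flagGraphOf K V m).Walk A B) :
    flagInversions A B ≤ p.length := by
  induction p with
  | nil => exact (flagInversions_self hV _).le
  | cons h p ih =>
    rw [SimpleGraph.Walk.length_cons]
    exact (flagInversions_le_of_adj hV h _).trans (by omega)

theorem eq_of_flagInversions_eq_zero (hV : finrank K V = m) (h : flagInversions A B = 0) :
    A = B := by
  have hA := isFullChain_flagExt A.2 hV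
  have hB := isFullChain_flagExt B.2 hV
  refine Subtype.ext (funext fun t => ?_)
  rw [← flagExt_succ A.1 t, ← flagExt_succ B.1 t]
  have hi : t.val + 1 ≤ m := by omega
  by_contra hne
  -- `A_i ≠ B_i` gives `dim (A_i ⊓ B_i) < i = dim (V ⊓ B_i)`, which produces an inversion
  have hlt : meetRank (flagExt m A.1) (flagExt m B.1) (t + 1) (t + 1) < t + 1 := by
    by_contra! hge
    have hinfA := eq_of_le_of_finrank_le inf_le_left ((hA.2 _ hi).le.trans hge)
    have hinfB := eq_of_le_of_finrank_le inf_le_right ((hB.2 _ hi).le.trans hge)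
    exact hne (hinfA.symm.trans hinfB)
  have hcol : meetRank (flagExt m A.1) (flagExt m B.1) m (t + 1) = t + 1 := by
    rw [meetRank, hA.eq_top hV, top_inf_eq, hB.2 _ hi]
  rw [meetRank_eq_card hA hB hV hi] at hlt
  rw [meetRank_eq_card hA hB hV le_rfl] at hcol
  have := inversions_pos_of_card_lt hlt hcol.ge
  rw [flagInversions] at h
  omega

theorem exists_adj_flagInversions_add_one (hV : finrank K V = m)
    (hpos : 0 < flagInversions A B) :
    ∃ A', (flagGraphOf K V m).Adj A A' ∧ flagInversions A' B + 1 = flagInversions A B := by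
  have hA := isFullChain_flagExt A.2 hV
  have hB := isFullChain_flagExt B.2 hV
  set σ := jump (flagExt m A.1) (flagExt m B.1)
  obtain ⟨k, hk, hkm, hdesc⟩ := exists_descent_of_inversions_pos hpos
  obtain ⟨N, hC, hjump⟩ := exists_update_jump_eq_comp_swap hA hB hV hk hkm hdesc
  set C := Function.update (flagExt m A.1) k N
  let A' : {fl : Fin (m - 1) → Submodule K V // IsCompleteFlagOf K m fl} :=
    ⟨fun t => C (t + 1), isCompleteFlagOf_of_isFullChain hC⟩
  have hext : ∀ i ≤ m, flagExt m A'.1 i = C i := fun i hi => flagExt_of_isFullChain hC hV hi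
  have hjump' : ∀ i ∈ Icc 1 m,
      jump (flagExt m A'.1) (flagExt m B.1) i = (σ ∘ Equiv.swap k (k + 1)) i := by
    intro i hi
    rw [← hjump i hi]
    rw [mem_Icc] at hi
    exact jump_congr_left (hext i hi.2) (hext (i - 1) (by omega))
  refine ⟨A', flagGraphOf_adj_iff.2 ⟨k, hk, hkm, fun heq => ?_, fun i hik => ?_⟩, ?_⟩
  · have hCA : C = flagExt m A.1 := by
      rw [Function.update_eq_self_iff, heq, hext k (by omega)]
      exact (Function.update_self (β := fun _ => Submodule K V) k N _).symm
    have := hjump k (mem_Icc.2 ⟨hk, by omega⟩)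
    rw [hCA, Function.comp_apply, Equiv.swap_apply_left k (k + 1)] at this
    omega
  · refine flagExt_congr fun t ht => ?_
    rw [← flagExt_succ A.1 t]
    exact (Function.update_of_ne (by omega) _ _).symm
  · rw [flagInversions, flagInversions, inversions_congr hjump',
      inversions_comp_swap_add_one hk hkm hdesc]

theorem exists_walk_length_eq_flagInversions (hV : finrank K V = m)
    (A B : {fl : Fin (m - 1) → Submodule K V // IsCompleteFlagOf K m fl}) :
    ∃ p : (flagGraphOf K V m).Walk A B, p.length = flagInversions A B := by
  obtain ⟨n, hn⟩ : ∃ n, flagInversions A B = n := ⟨_, rfl⟩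
  induction n generalizing A with
  | zero =>
    obtain rfl := eq_of_flagInversions_eq_zero hV hn
    exact ⟨.nil, hn.symm⟩
  | succ n ih =>
    obtain ⟨A', hadj, hA'⟩ := exists_adj_flagInversions_add_one (A := A) (B := B) hV (by omega)
    obtain ⟨p, hp⟩ := ih A' (by omega)
    exact ⟨.cons hadj p, by rw [SimpleGraph.Walk.length_cons, hp]; omega⟩

theorem edist_eq_flagInversions (hV : finrank K V = m)
    (A B : {fl : Fin (m - 1) → Submodule K V // IsCompleteFlagOf K m fl}) :
    (flagGraphOf K V m).edist A B = flagInversions A B := by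
  obtain ⟨p, hp⟩ := exists_walk_length_eq_flagInversions hV A B
  refine le_antisymm (hp ▸ SimpleGraph.edist_le p) ?_
  rw [SimpleGraph.edist_eq_sInf, sInf_range]
  exact le_iInf fun q => by exact_mod_cast flagInversions_le_length hV q

theorem exists_flagInversions_eq_choose (hV : finrank K V = m)
    (A : {fl : Fin (m - 1) → Submodule K V // IsCompleteFlagOf K m fl}) :
    ∃ B, flagInversions A B = m.choose 2 := by
  have hA := isFullChain_flagExt A.2 hV
  obtain ⟨C, hC, hjump⟩ := hA.exists_jump_eq_rev hV
  refine ⟨⟨fun t => C (t + 1), isCompleteFlagOf_of_isFullChain hC⟩, ?_⟩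
  rw [flagInversions, ← inversions_rev m]
  refine inversions_congr fun i hi => ?_
  rw [← hjump i hi]
  rw [mem_Icc] at hi
  exact jump_congr_right hA hC (isFullChain_flagExt (isCompleteFlagOf_of_isFullChain hC) hV) hV
    hi.1 hi.2 fun j hj => flagExt_of_isFullChain hC hV hj

theorem nonempty_completeFlag (hV : finrank K V = m) :
    Nonempty {fl : Fin (m - 1) → Submodule K V // IsCompleteFlagOf K m fl} :=
  let ⟨_, hC⟩ := exists_isFullChain hV
  ⟨⟨_, isCompleteFlagOf_of_isFullChain hC⟩⟩

end Distance

end Development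

/-- for an `m`-dimensional vector space `V` over a field `K` (`m ≥ 2`),
the flag graph is connected and every vertex has eccentricity exactly `m(m-1)/2`;
in particular the diameter and the radius both equal `m.choose 2`. -/
theorem flagGraph_connected_and_eccentricity (K : Type*) [Field K] (V : Type*)
    [AddCommGroup V] [Module K V] (m : ℕ) (hm : 2 ≤ m)
    (hdim : Module.finrank K V = m) :
    (flagGraphOf K V m).Connected ∧
    (∀ v, (⨆ w, (flagGraphOf K V m).edist v w) = ((m * (m-1) / 2 : ℕ) : ℕ∞)) ∧
    (flagGraphOf K V m).ediam = ((Nat.choose m 2 : ℕ) : ℕ∞) ∧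
    (⨅ v, ⨆ w, (flagGraphOf K V m).edist v w) = ((Nat.choose m 2 : ℕ) : ℕ∞) := by
  have : FiniteDimensional K V := .of_finrank_pos (by omega)
  have := nonempty_completeFlag hdim
  have hecc : ∀ A, ⨆ B, (flagGraphOf K V m).edist A B = (m.choose 2 : ℕ∞) := fun A => by
    obtain ⟨B, hB⟩ := exists_flagInversions_eq_choose hdim A
    refine le_antisymm (iSup_le fun B' => ?_) (le_iSup_of_le B ?_)
    · rw [edist_eq_flagInversions hdim]
      exact_mod_cast inversions_le_choose m _
    · rw [edist_eq_flagInversions hdim, hB]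
  refine ⟨⟨fun A B => SimpleGraph.reachable_of_edist_ne_top ?_⟩, fun A => ?_, ?_, ?_⟩
  · rw [edist_eq_flagInversions hdim]
    exact ENat.natCast_ne_top _
  · rw [hecc, Nat.choose_two_right]
  · simp only [SimpleGraph.ediam_eq_iSup_iSup_edist, hecc, iSup_const]
  · simp only [hecc, iInf_const]

end NCPaper
end

section
/- For every n ≥ 1 the lattice NCP_n is supersolvable. In fact, the maximal chain d = (π_0 < π_1 < ⋯ < π_{n−1}), where π_0 is the partition into singletons and for k ≥ 1 the partition π_k has unique non-singleton block {1,2,…,k+1}, is an M-chain: for every chain c of NCP_n, the sublattice of NCP_n generated by c ∪ d is distributive. -/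
/-!
Enlarge the chain `C` by `⊥` and `⊤`, and send a function `f` that is antitone along `C` to
`N f = ⋀_{R ∈ C} (R ⊔ π_{f R})`, where `R ⊔ π_t` is `R` with all blocks of minimum `≤ t` merged.
This map sends `f ⊓ g` to `N f ⊓ N g` by a pointwise check, and `f ⊔ g` to `N f ⊔ N g`: a point is
joined to the minimum of its block by a walk whose steps each lie in `N f` or in `N g`, because if
`k ≤ max (f R) (g R)` along a chain and `f`, `g` are antitone, then `k ≤ f` or `k ≤ g` along all
of it. Hence the image of `N` is closed under joins and meets and is distributive, being a lattice
image of the antitone functions. It contains every `R ∈ C` (take `f = 0` above `R`, large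
elsewhere) and every `π_t` (take `f ≡ t`), and the `π_k` form a maximal chain since `π_{k+1}`
covers `π_k`.
-/

namespace NCPaper

/-- A partition (setoid) of `Fin n` is noncrossing if there are no indices
`a < b < c < d` with `a, c` in one block and `b, d` in a different block;
equivalently, crossing pairs must lie in the same block. -/
def IsNoncrossing {m : ℕ} (P : Setoid (Fin m)) : Prop :=
  ∀ a b c d : Fin m, a < b → b < c → c < d → P a c → P b d → P a b

/-- The noncrossing partitions of `{1, …, n}`, ordered by refinement. -/
def NCP (n : ℕ) : Type := {P : Setoid (Fin n) // IsNoncrossing P}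

instance (n : ℕ) : PartialOrder (NCP n) :=
  Subtype.partialOrder _

/-- A subset of a poset is closed under (binary) joins and meets of the ambient poset. -/
def LatClosed {α : Type*} [PartialOrder α] (L : Set α) : Prop :=
  (∀ x ∈ L, ∀ y ∈ L, ∀ z, IsLUB {x, y} z → z ∈ L) ∧
  (∀ x ∈ L, ∀ y ∈ L, ∀ z, IsGLB {x, y} z → z ∈ L)

/-- The distributive law `x ⊓ (y ⊔ z) = (x ⊓ y) ⊔ (x ⊓ z)` holds among elements of `L`,
expressed via least upper bounds and greatest lower bounds of the ambient poset. -/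
def DistribOn {α : Type*} [PartialOrder α] (L : Set α) : Prop :=
  ∀ x ∈ L, ∀ y ∈ L, ∀ z ∈ L, ∀ a b p q r : α,
    IsLUB {y, z} a → IsGLB {x, a} b → IsGLB {x, y} p → IsGLB {x, z} q →
    IsLUB {p, q} r → b = r

/-- A finite lattice (here: poset) is supersolvable if it has an M-chain: a maximal
chain `D` such that for every chain `C` the sublattice generated by `C ∪ D` is
distributive. -/
def SupersolvablePoset (α : Type*) [PartialOrder α] : Prop :=
  ∃ D : Set α, IsMaxChain (· ≤ ·) D ∧
    ∀ C : Set α, IsChain (· ≤ ·) C →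
      ∃ L : Set α, C ∪ D ⊆ L ∧ LatClosed L ∧ DistribOn L

/-- The `k`-th element of the distinguished chain: the partition whose unique
non-singleton block is `{0, 1, …, k}` (i.e. `{1, …, k+1}` in 1-indexed notation). -/
def dSetoid (n k : ℕ) : Setoid (Fin n) :=
  Setoid.ker (fun i : Fin n => if i.val ≤ k then 0 else i.val)

lemma dSetoid_noncrossing (n k : ℕ) : IsNoncrossing (dSetoid n k) := by
  rintro a b c d hab hbc hcd hac hbd
  have hab' : a.val < b.val := hab
  have hbc' : b.val < c.val := hbc
  have hac' : (if a.val ≤ k then 0 else a.val) = (if c.val ≤ k then 0 else c.val) := hac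
  show (if a.val ≤ k then 0 else a.val) = (if b.val ≤ k then 0 else b.val)
  split_ifs at hac' ⊢ <;> omega

/-- The distinguished maximal chain of `NCP n`. -/
def dChain (n : ℕ) (k : Fin n) : NCP n :=
  ⟨dSetoid n k.val, dSetoid_noncrossing n k.val⟩

end NCPaper

theorem IsChain.le_or_lt {α : Type*} [Preorder α] {s : Set α} (hs : IsChain (· ≤ ·) s) {x y : α}
    (hx : x ∈ s) (hy : y ∈ s) : x ≤ y ∨ y < x :=
  or_iff_not_imp_left.2 fun h => lt_of_le_not_ge ((hs.total hx hy).resolve_left h) h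

theorem AntitoneOn.forall_le_or_forall_le {α β : Type*} [Preorder α] [LinearOrder β] {s : Set α}
    {f g : α → β} {k : β} (hs : IsChain (· ≤ ·) s) (hf : AntitoneOn f s) (hg : AntitoneOn g s)
    (h : ∀ x ∈ s, k ≤ f x ⊔ g x) : (∀ x ∈ s, k ≤ f x) ∨ ∀ x ∈ s, k ≤ g x := by
  by_contra! hfg
  obtain ⟨⟨x, hx, hfx⟩, ⟨y, hy, hgy⟩⟩ := hfg
  rcases hs.total hx hy with hxy | hyx
  · exact (h y hy).not_gt (sup_lt_iff.2 ⟨(hf hx hy hxy).trans_lt hfx, hgy⟩)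
  · exact (h x hx).not_gt (sup_lt_iff.2 ⟨hfx, (hg hy hx hyx).trans_lt hgy⟩)

theorem antitone_ite_le {α β : Type*} [Preorder α] [Preorder β] (a : α) [DecidablePred (a ≤ ·)]
    {b c : β} (hbc : b ≤ c) : Antitone fun x => if a ≤ x then b else c := by
  intro x y hxy
  by_cases hx : a ≤ x
  · simp [hx, hx.trans hxy]
  · by_cases hy : a ≤ y <;> simp [hx, hy, hbc]

def antitoneOnSublattice {α β : Type*} [Preorder α] [Lattice β] (s : Set α) :
    Sublattice (α → β) where
  carrier := {f | AntitoneOn f s}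
  supClosed' _ hf _ hg := AntitoneOn.sup hf hg
  infClosed' _ hf _ hg := AntitoneOn.inf hf hg

theorem mem_antitoneOnSublattice {α β : Type*} [Preorder α] [Lattice β] {s : Set α} {f : α → β} :
    f ∈ antitoneOnSublattice s ↔ AntitoneOn f s :=
  Iff.rfl

namespace NCPaper

theorem latClosed_range {α β : Type*} [Lattice α] [Lattice β] (φ : LatticeHom α β) :
    LatClosed (Set.range φ) := by
  refine ⟨?_, ?_⟩ <;> rintro _ ⟨x, rfl⟩ _ ⟨y, rfl⟩ z hz
  · exact ⟨x ⊔ y, (map_sup φ x y).trans (isLUB_pair.unique hz)⟩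
  · exact ⟨x ⊓ y, (map_inf φ x y).trans (isGLB_pair.unique hz)⟩

theorem distribOn_range {α β : Type*} [DistribLattice α] [Lattice β] (φ : LatticeHom α β) :
    DistribOn (Set.range φ) := by
  rintro _ ⟨x, rfl⟩ _ ⟨y, rfl⟩ _ ⟨z, rfl⟩ a b p q r ha hb hp hq hr
  obtain rfl := isLUB_pair.unique ha
  obtain rfl := isGLB_pair.unique hb
  obtain rfl := isGLB_pair.unique hp
  obtain rfl := isGLB_pair.unique hq
  obtain rfl := isLUB_pair.unique hr
  simp only [← map_sup, ← map_inf, inf_sup_left]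

variable {n : ℕ}

namespace NCP

instance : InfSet (NCP n) where
  sInf s := ⟨⟨fun a b => ∀ P ∈ s, P.val a b,
    ⟨fun a P _ => P.val.refl a, fun h P hP => P.val.symm (h P hP),
      fun h h' P hP => P.val.trans (h P hP) (h' P hP)⟩⟩,
    fun a b c d hab hbc hcd hac hbd P hP => P.prop a b c d hab hbc hcd (hac P hP) (hbd P hP)⟩

theorem isGLB_sInf (s : Set (NCP n)) : IsGLB s (sInf s) :=
  ⟨fun P hP _ _ hab => hab P hP, fun _ hQ _ _ hab _ hP => hQ hP hab⟩

instance : CompleteLattice (NCP n) := completeLatticeOfInf _ isGLB_sInf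

theorem rel_inf {x y : NCP n} {a b : Fin n} : (x ⊓ y).val a b ↔ x.val a b ∧ y.val a b := by
  show (∀ P ∈ ({x, y} : Set (NCP n)), P.val a b) ↔ _
  simp

theorem rel_iInf {ι : Sort*} {F : ι → NCP n} {a b : Fin n} :
    (⨅ i, F i).val a b ↔ ∀ i, (F i).val a b :=
  Set.forall_mem_range

theorem rel_top {a b : Fin n} : (⊤ : NCP n).val a b := fun _ h => h.elim

instance : Finite (NCP n) :=
  have : Finite (Setoid (Fin n)) :=
    Finite.of_injective (fun s : Setoid (Fin n) => ⇑s) fun _ _ h =>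
      Setoid.ext fun a b => iff_of_eq (congrFun₂ h a b)
  Subtype.finite

end NCP

open NCP

section BlockMin

open Classical in
noncomputable def blockMin (R : NCP n) (a : Fin n) : Fin n :=
  (Finset.univ.filter (R.val a ·)).min' ⟨a, by simp⟩

variable (R : NCP n) {a b : Fin n}

theorem rel_blockMin (a : Fin n) : R.val a (blockMin R a) := by
  classical
  exact (Finset.mem_filter.1 (Finset.min'_mem _ _)).2

theorem blockMin_le_of_rel (h : R.val a b) : blockMin R a ≤ b := by
  classical
  exact Finset.min'_le _ b (by simpa using h)

theorem blockMin_le (a : Fin n) : blockMin R a ≤ a := blockMin_le_of_rel R (R.val.refl a)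

theorem blockMin_eq_of_rel (h : R.val a b) : blockMin R a = blockMin R b :=
  le_antisymm (blockMin_le_of_rel R (R.val.trans h (rel_blockMin R b)))
    (blockMin_le_of_rel R (R.val.trans (R.val.symm h) (rel_blockMin R a)))

theorem blockMin_le_blockMin_of_lt_of_lt {x y z : Fin n} (hxy : x < y) (hyz : y < z)
    (hxz : R.val x z) : blockMin R x ≤ blockMin R y := by
  rcases lt_or_ge (blockMin R y) x with hy | hy
  · have hyx : R.val (blockMin R y) x :=
      R.prop _ x y z hy hxy hyz (R.val.symm (rel_blockMin R y)) hxz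
    exact (blockMin_eq_of_rel R (R.val.symm hyx)).trans_le (blockMin_le R _)
  · exact (blockMin_le R x).trans hy

end BlockMin

section Prefix

/-- The paper's `π_t`, extending `dChain n` to all `t : ℕ`. -/
def prefixPartition (n t : ℕ) : NCP n := ⟨dSetoid n t, dSetoid_noncrossing n t⟩

theorem rel_prefixPartition {t : ℕ} {a b : Fin n} :
    (prefixPartition n t).val a b ↔ a = b ∨ (a : ℕ) ≤ t ∧ (b : ℕ) ≤ t := by
  show (if (a : ℕ) ≤ t then 0 else (a : ℕ)) = (if (b : ℕ) ≤ t then 0 else (b : ℕ)) ↔ _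
  rw [Fin.ext_iff]
  split_ifs <;> omega

theorem prefixPartition_mono : Monotone (prefixPartition n) := by
  intro s t hst a b hab
  rw [rel_prefixPartition] at hab ⊢
  omega

theorem prefixPartition_zero : prefixPartition n 0 = ⊥ := by
  refine le_bot_iff.1 fun a b hab => ?_
  obtain rfl : a = b := by rw [rel_prefixPartition] at hab; omega
  exact (⊥ : NCP n).val.refl a

theorem prefixPartition_eq_top {t : ℕ} (ht : n ≤ t + 1) : prefixPartition n t = ⊤ :=
  top_le_iff.1 fun a b _ => rel_prefixPartition.2 (Or.inr ⟨by omega, by omega⟩)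

theorem prefixPartition_wcovBy {k : ℕ} (hk : k + 1 < n) :
    prefixPartition n k ⩿ prefixPartition n (k + 1) := by
  refine wcovBy_iff_le_and_eq_or_eq.2 ⟨prefixPartition_mono k.le_succ, fun x hkx hxk => ?_⟩
  obtain ⟨c, hc⟩ : ∃ c : Fin n, (c : ℕ) = k + 1 := ⟨⟨k + 1, hk⟩, rfl⟩
  by_cases hxc : ∃ a : Fin n, (a : ℕ) ≤ k ∧ x.val a c
  · obtain ⟨a, hak, hac⟩ := hxc
    have hxc : ∀ u : Fin n, (u : ℕ) ≤ k + 1 → x.val u c := by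
      intro u hu
      by_cases huc : (u : ℕ) = k + 1
      · obtain rfl : u = c := by omega
        exact x.val.refl u
      · exact x.val.trans (hkx (rel_prefixPartition.2 (Or.inr ⟨by omega, hak⟩))) hac
    refine Or.inr (le_antisymm hxk fun u v huv => ?_)
    rcases rel_prefixPartition.1 huv with rfl | ⟨hu, hv⟩
    · exact x.val.refl u
    · exact x.val.trans (hxc u hu) (x.val.symm (hxc v hv))
  · simp only [not_exists, not_and] at hxc
    refine Or.inl (le_antisymm (fun u v huv => ?_) hkx)
    rcases rel_prefixPartition.1 (hxk huv) with rfl | ⟨hu, hv⟩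
    · exact (prefixPartition n k).val.refl u
    · refine rel_prefixPartition.2 ?_
      by_cases hu' : (u : ℕ) ≤ k <;> by_cases hv' : (v : ℕ) ≤ k
      · exact Or.inr ⟨hu', hv'⟩
      · exact absurd (show v = c by omega ▸ huv) (hxc u hu')
      · exact absurd (show u = c by omega ▸ x.val.symm huv) (hxc v hv')
      · exact Or.inl (by omega)

end Prefix

section MergeBelow

def mergeBelow (R : NCP n) (t : ℕ) : NCP n :=
  ⟨⟨fun a b => R.val a b ∨ (blockMin R a : ℕ) ≤ t ∧ (blockMin R b : ℕ) ≤ t,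
    ⟨fun a => Or.inl (R.val.refl a),
      fun h => h.imp R.val.symm And.symm,
      fun {a b c} hab hbc => by
        rcases hab with hab | hab <;> rcases hbc with hbc | hbc
        · exact Or.inl (R.val.trans hab hbc)
        · exact Or.inr ⟨blockMin_eq_of_rel R hab ▸ hbc.1, hbc.2⟩
        · exact Or.inr ⟨hab.1, blockMin_eq_of_rel R hbc ▸ hab.2⟩
        · exact Or.inr ⟨hab.1, hbc.2⟩⟩⟩, by
    intro a b c d hab hbc hcd hac hbd
    rcases hac with hac | hac <;> rcases hbd with hbd | hbd
    · exact Or.inl (R.prop a b c d hab hbc hcd hac hbd)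
    · have := Fin.le_def.1 (blockMin_le_blockMin_of_lt_of_lt R hab hbc hac)
      exact Or.inr ⟨this.trans hbd.1, hbd.1⟩
    · have := Fin.le_def.1 (blockMin_le_blockMin_of_lt_of_lt R hbc hcd hbd)
      exact Or.inr ⟨hac.1, this.trans hac.2⟩
    · exact Or.inr ⟨hac.1, hbd.1⟩⟩

theorem mergeBelow_eq_sup (R : NCP n) (t : ℕ) : mergeBelow R t = R ⊔ prefixPartition n t := by
  refine le_antisymm (fun a b hab => ?_) (sup_le (fun a b => Or.inl) fun a b hab => ?_)
  · rcases hab with hab | ⟨ha, hb⟩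
    · exact le_sup_left (a := R) hab
    · have hπ : (prefixPartition n t).val (blockMin R a) (blockMin R b) :=
        rel_prefixPartition.2 (Or.inr ⟨ha, hb⟩)
      exact (R ⊔ prefixPartition n t).val.trans
        ((R ⊔ prefixPartition n t).val.trans (le_sup_left (a := R) (rel_blockMin R a))
          (le_sup_right (b := prefixPartition n t) hπ))
        (le_sup_left (a := R) (R.val.symm (rel_blockMin R b)))
  · rcases rel_prefixPartition.1 hab with rfl | ⟨ha, hb⟩
    · exact Or.inl (R.val.refl a)
    · exact Or.inr ⟨(Fin.le_def.1 (blockMin_le R a)).trans ha,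
        (Fin.le_def.1 (blockMin_le R b)).trans hb⟩

theorem rel_sup_prefixPartition {R : NCP n} {t : ℕ} {a b : Fin n} :
    (R ⊔ prefixPartition n t).val a b ↔
      R.val a b ∨ (blockMin R a : ℕ) ≤ t ∧ (blockMin R b : ℕ) ≤ t := by
  rw [← mergeBelow_eq_sup]
  rfl

end MergeBelow

section NormalForm

variable (C : Set (NCP n))

def normalForm (f : NCP n → ℕ) : NCP n := ⨅ R ∈ C, R ⊔ prefixPartition n (f R)

variable {C} {f g : NCP n → ℕ}

theorem rel_normalForm {a b : Fin n} :
    (normalForm C f).val a b ↔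
      ∀ R ∈ C, R.val a b ∨ (blockMin R a : ℕ) ≤ f R ∧ (blockMin R b : ℕ) ≤ f R :=
  rel_iInf.trans <| forall_congr' fun _ => rel_iInf.trans <| forall_congr' fun _ =>
    rel_sup_prefixPartition

theorem normalForm_mono (h : f ≤ g) : normalForm C f ≤ normalForm C g :=
  iInf₂_mono fun R _ => sup_le_sup_left (prefixPartition_mono (h R)) R

theorem normalForm_inf (f g : NCP n → ℕ) :
    normalForm C (f ⊓ g) = normalForm C f ⊓ normalForm C g := by
  refine le_antisymm (le_inf (normalForm_mono inf_le_left) (normalForm_mono inf_le_right))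
    fun a b hab => rel_normalForm.2 fun R hR => ?_
  obtain ⟨hf, hg⟩ := rel_inf.1 hab
  rcases rel_normalForm.1 hf R hR with h | ⟨ha, hb⟩
  · exact Or.inl h
  rcases rel_normalForm.1 hg R hR with h | ⟨ha', hb'⟩
  · exact Or.inl h
  exact Or.inr ⟨le_inf ha ha', le_inf hb hb'⟩

theorem rel_normalForm_blockMin (hC : IsChain (· ≤ ·) C) {j : NCP n} (hj : j ∈ C) {a : Fin n}
    (ha : ∀ R ∈ C, R < j → (a : ℕ) ≤ f R) : (normalForm C f).val a (blockMin j a) := by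
  refine rel_normalForm.2 fun R hR => ?_
  rcases hC.le_or_lt hj hR with hjR | hRj
  · exact Or.inl (hjR (rel_blockMin j a))
  · have := Fin.le_def.1 (blockMin_le R a)
    have := Fin.le_def.1 (blockMin_le R (blockMin j a))
    have := Fin.le_def.1 (blockMin_le j a)
    have := ha R hR hRj
    exact Or.inr ⟨by omega, by omega⟩

/-- Walk from `a` down to the minimum of its `j`-block; each step stays inside
`normalForm C f` or inside `normalForm C g`. -/
theorem rel_blockMin_of_forall_lt (hC : IsChain (· ≤ ·) C) (hf : AntitoneOn f C)
    (hg : AntitoneOn g C) {U : NCP n} (hfU : normalForm C f ≤ U) (hgU : normalForm C g ≤ U)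
    {j : NCP n} (hj : j ∈ C) (a : Fin n)
    (ha : ∀ R ∈ C, R < j → (blockMin R a : ℕ) ≤ f R ⊔ g R) : U.val a (blockMin j a) := by
  induction a using WellFoundedLT.induction with
  | ind a ih => ?_
  rcases (blockMin_le j a).eq_or_lt with heq | hlt
  · rw [heq]
  obtain ⟨j₁, hj₁j, hj₁⟩ :=
    exists_minimal_le_of_wellFoundedLT (fun R => R ∈ C ∧ blockMin R a < a) j ⟨hj, hlt⟩
  have hmin : ∀ R ∈ C, R < j₁ → blockMin R a = a := fun R hR hRj₁ =>
    (blockMin_le R a).eq_of_not_lt fun h => hj₁.not_prop_of_lt hRj₁ ⟨hR, h⟩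
  set a₁ := blockMin j₁ a
  -- `j₁` is the first partition of `C` in which `a` is not a block minimum, so on the part of `C`
  -- below `j₁` one of `f`, `g` stays `≥ a`, and that normal form joins `a` to `a₁`.
  have hstep : U.val a a₁ := by
    have hle : ∀ R ∈ {R ∈ C | R < j₁}, (a : ℕ) ≤ f R ⊔ g R := fun R ⟨hR, hRj₁⟩ =>
      hmin R hR hRj₁ ▸ ha R hR (hRj₁.trans_le hj₁j)
    rcases AntitoneOn.forall_le_or_forall_le (hC.mono (Set.sep_subset C _))
      (hf.mono (Set.sep_subset C _)) (hg.mono (Set.sep_subset C _)) hle with h | h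
    · exact hfU (rel_normalForm_blockMin hC hj₁.prop.1 fun R hR hRj₁ => h R ⟨hR, hRj₁⟩)
    · exact hgU (rel_normalForm_blockMin hC hj₁.prop.1 fun R hR hRj₁ => h R ⟨hR, hRj₁⟩)
  have hrec : U.val a₁ (blockMin j a₁) := ih a₁ hj₁.prop.2 fun R hR hRj => by
    rcases hC.le_or_lt hj₁.prop.1 hR with hj₁R | hRj₁
    · rw [← blockMin_eq_of_rel R (hj₁R (rel_blockMin j₁ a))]
      exact ha R hR hRj
    · have := Fin.le_def.1 (blockMin_le R a₁)
      have := Fin.lt_def.1 hj₁.prop.2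
      have := congrArg Fin.val (hmin R hR hRj₁)
      have := ha R hR hRj
      omega
  rw [blockMin_eq_of_rel j (hj₁j (rel_blockMin j₁ a))]
  exact U.val.trans hstep hrec

theorem normalForm_sup (hC : IsChain (· ≤ ·) C) (htop : ⊤ ∈ C) (hf : AntitoneOn f C)
    (hg : AntitoneOn g C) : normalForm C (f ⊔ g) = normalForm C f ⊔ normalForm C g := by
  refine le_antisymm (fun a b hab => ?_)
    (sup_le (normalForm_mono le_sup_left) (normalForm_mono le_sup_right))
  obtain ⟨i, -, hi⟩ :=
    exists_minimal_le_of_wellFoundedLT (fun R => R ∈ C ∧ R.val a b) ⊤ ⟨htop, rel_top⟩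
  have hbelow : ∀ R ∈ C, R < i →
      (blockMin R a : ℕ) ≤ f R ⊔ g R ∧ (blockMin R b : ℕ) ≤ f R ⊔ g R := fun R hR hRi =>
    (rel_normalForm.1 hab R hR).resolve_left fun h => hi.not_prop_of_lt hRi ⟨hR, h⟩
  have hwalk := rel_blockMin_of_forall_lt hC hf hg le_sup_left le_sup_right hi.prop.1
  have ha := hwalk a fun R hR hRi => (hbelow R hR hRi).1
  have hb := hwalk b fun R hR hRi => (hbelow R hR hRi).2
  rw [blockMin_eq_of_rel i hi.prop.2] at ha
  exact (normalForm C f ⊔ normalForm C g).val.trans ha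
    ((normalForm C f ⊔ normalForm C g).val.symm hb)

def normalFormHom (hC : IsChain (· ≤ ·) C) (htop : ⊤ ∈ C) :
    LatticeHom (antitoneOnSublattice (β := ℕ) C) (NCP n) where
  toFun f := normalForm C f
  map_sup' f g := by
    change normalForm C ((f : NCP n → ℕ) ⊔ g) = normalForm C f ⊔ normalForm C g
    exact normalForm_sup hC htop (mem_antitoneOnSublattice.1 f.2)
      (mem_antitoneOnSublattice.1 g.2)
  map_inf' f g := by
    change normalForm C ((f : NCP n → ℕ) ⊓ g) = normalForm C f ⊓ normalForm C g
    exact normalForm_inf (f : NCP n → ℕ) g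

open Classical in
theorem normalForm_ite {R₀ : NCP n} (hR₀ : R₀ ∈ C) :
    normalForm C (fun R => if R₀ ≤ R then 0 else n) = R₀ := by
  refine le_antisymm (iInf₂_le_of_le R₀ hR₀ ?_) (le_iInf₂ fun R _ => ?_)
  · simp [prefixPartition_zero]
  · dsimp only
    split_ifs with h
    · exact h.trans le_sup_left
    · simp [prefixPartition_eq_top n.le_succ]

theorem normalForm_const (hbot : ⊥ ∈ C) (t : ℕ) :
    normalForm C (fun _ => t) = prefixPartition n t :=
  le_antisymm (iInf₂_le_of_le ⊥ hbot (bot_sup_eq _).le) (le_iInf₂ fun _ _ => le_sup_right)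

end NormalForm

theorem isMaxChain_range_dChain (hn : 1 ≤ n) : IsMaxChain (· ≤ ·) (Set.range (dChain n)) := by
  obtain ⟨m, rfl⟩ := Nat.exists_eq_add_of_le' hn
  exact IsMaxChain.range_fin_of_covBy prefixPartition_zero (prefixPartition_eq_top le_rfl)
    fun k => prefixPartition_wcovBy (k := k) (by omega)

theorem exists_latClosed_distribOn_of_isChain (C : Set (NCP n)) (hC : IsChain (· ≤ ·) C) :
    ∃ L : Set (NCP n), C ∪ Set.range (dChain n) ⊆ L ∧ LatClosed L ∧ DistribOn L := by
  classical
  set C' := insert ⊥ (insert ⊤ C)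
  have hC' : IsChain (· ≤ ·) C' :=
    (hC.insert fun _ _ _ => Or.inr le_top).insert fun _ _ _ => Or.inl bot_le
  let φ := normalFormHom hC' (by simp [C'])
  refine ⟨Set.range φ, ?_, latClosed_range φ, distribOn_range φ⟩
  rintro _ (hR | ⟨j, rfl⟩)
  · exact ⟨⟨_, (antitone_ite_le _ (Nat.zero_le n)).antitoneOn _⟩,
      normalForm_ite (by simp [C', hR])⟩
  · exact ⟨⟨_, antitoneOn_const⟩, normalForm_const (by simp [C']) j⟩

/-- `NCP n` is a lattice and the chain `π_0 < π_1 < ⋯ < π_{n-1}`, where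
`π_k` has unique non-singleton block `{1, …, k+1}`, is an M-chain; in particular
`NCP n` is supersolvable. -/
theorem NCP_supersolvable (n : ℕ) (hn : 1 ≤ n) :
    (∀ x y : NCP n, (∃ z, IsLUB {x, y} z) ∧ ∃ z, IsGLB {x, y} z) ∧
    IsMaxChain (· ≤ ·) (Set.range (dChain n)) ∧
    (∀ C : Set (NCP n), IsChain (· ≤ ·) C →
      ∃ L : Set (NCP n), C ∪ Set.range (dChain n) ⊆ L ∧ LatClosed L ∧ DistribOn L) ∧
    SupersolvablePoset (NCP n) :=
  have hD := isMaxChain_range_dChain hn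
  have hM := @exists_latClosed_distribOn_of_isChain n
  ⟨fun _ _ => ⟨⟨_, isLUB_pair⟩, _, isGLB_pair⟩, hD, hM, _, hD, hM⟩

end NCPaper
end
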